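/- Let N ≥ 1, let x : Fin N → ℝ³ be particle positions, let H : Fin N → Finset (Fin N) be the neighbor (horizon) sets with i ∉ H i and x j ≠ x i for every j ∈ H i, let c > 0, let V : Fin N → ℝ be positive volumes, and let μ, ν : Fin N → Fin N → ℝ be correction factors. For a displacement field u : Fin N → ℝ³ set y k = x k + u k and define the total force density on particle i by F_i(u) = Σ_{j ∈ H i} c·μ i j·ν i j·V j·((‖y j − y i‖ − ‖x j − x i‖)/‖x j − x i‖)·(y j − y i)/‖y j − y i‖. Suppose u is such that y j ≠ y i for every i and every j ∈ H i. Then for all i, j and all coordinate indices p, q ∈ {1,2,3}, the partial derivative of the p-th component of F_i with respect to the q-th component of u j exists and equals: (a) c·μ i j·ν i j·V j·( δ_{pq}/‖x j − x i‖ − δ_{pq}/‖y j − y i‖ + (y j − y i)_p (y j − y i)_q /‖y j − y i‖³ ) if j ∈ H i; (b) 0 if j ≠ i and j ∉ H i; and (c) c·Σ_{k ∈ H i} μ i k·ν i k·V k·( δ_{pq}/‖y k − y i‖ − δ_{pq}/‖x k − x i‖ − (y k − y i)_p (y k − y i)_q /‖y k − y i‖³ ) if j = i. -/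

import Mathlib

/-!
For `r ≠ 0` the bond force `(C * ((‖z‖ - r) / r) / ‖z‖) • z` equals `(C * (r⁻¹ - ‖z‖⁻¹)) • z` for
every `z` (both sides vanish at `z = 0`), so along a line `z + t • e` with `z ≠ 0` it has derivative
`(C * (r⁻¹ - ‖z‖⁻¹)) • e + (C * ⟪z, e⟫ / ‖z‖ ^ 3) • z`. Moving `u j` in the direction `e` moves the bond
vector `y k - y i` by `e` when `k = j ≠ i`, by `-e` for every bond when `j = i`, and not at all
otherwise; summing over the horizon and reading off the `p`-th coordinate gives the three formulas.
-/

open scoped RealInnerProductSpace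

section

variable {E : Type*} [NormedAddCommGroup E] [InnerProductSpace ℝ E]

theorem HasDerivAt.norm {f : ℝ → E} {f' : E} {t : ℝ} (hf : HasDerivAt f f' t) (hft : f t ≠ 0) :
    HasDerivAt (fun s => ‖f s‖) (⟪f t, f'⟫ / ‖f t‖) t := by
  have hsq : ‖f t‖ ^ 2 ≠ 0 := by positivity
  convert hf.norm_sq.sqrt hsq using 1
  · simp only [Real.sqrt_sq (norm_nonneg _)]
  · rw [Real.sqrt_sq (norm_nonneg _)]
    field_simp

noncomputable def bondForce (C r : ℝ) (z : E) : E := (C * ((‖z‖ - r) / r) / ‖z‖) • z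

noncomputable def bondForceDeriv (C r : ℝ) (z e : E) : E :=
  (C * (r⁻¹ - ‖z‖⁻¹)) • e + (C * ⟪z, e⟫ / ‖z‖ ^ 3) • z

theorem bondForce_eq_smul (C : ℝ) {r : ℝ} (hr : r ≠ 0) (z : E) :
    bondForce C r z = (C * (r⁻¹ - ‖z‖⁻¹)) • z := by
  rcases eq_or_ne z 0 with rfl | hz
  · simp [bondForce]
  · unfold bondForce
    congr 1
    field_simp

theorem HasDerivAt.bondForce (C : ℝ) {r : ℝ} (hr : r ≠ 0) {f : ℝ → E} {f' : E} {t : ℝ}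
    (hf : HasDerivAt f f' t) (hft : f t ≠ 0) :
    HasDerivAt (fun s => bondForce C r (f s)) (bondForceDeriv C r (f t) f') t := by
  have hn : ‖f t‖ ≠ 0 := norm_ne_zero_iff.2 hft
  simp only [bondForce_eq_smul C hr]
  refine ((((hf.norm hft).inv hn).const_sub r⁻¹).const_mul C).smul hf |>.congr_deriv ?_
  unfold bondForceDeriv
  congr 2
  field_simp

theorem bondForceDeriv_zero (C r : ℝ) (z : E) : bondForceDeriv C r z 0 = 0 := by
  simp [bondForceDeriv]

theorem bondForceDeriv_neg (C r : ℝ) (z e : E) :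
    bondForceDeriv C r z (-e) = -bondForceDeriv C r z e := by
  simp only [bondForceDeriv, smul_neg, inner_neg_right, mul_neg, neg_div, neg_smul, neg_add]

theorem hasLineDerivAt_sum_bondForce {ι : Type*} (s : Finset ι) (C r : ι → ℝ) (x u v : ι → E)
    (i : ι) (hr : ∀ k ∈ s, r k ≠ 0) (hz : ∀ k ∈ s, x k + u k ≠ x i + u i) :
    HasLineDerivAt ℝ (fun w : ι → E => ∑ k ∈ s, bondForce (C k) (r k) ((x k + w k) - (x i + w i)))
      (∑ k ∈ s, bondForceDeriv (C k) (r k) ((x k + u k) - (x i + u i)) (v k - v i)) u v := by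
  refine HasDerivAt.fun_sum fun k hk => ?_
  have hline : HasDerivAt (fun t : ℝ => (x k + (u + t • v) k) - (x i + (u + t • v) i))
      (v k - v i) 0 := by
    convert ((hasDerivAt_id (0 : ℝ)).smul_const (v k - v i)).const_add
      ((x k + u k) - (x i + u i)) using 1
    · funext t
      simp only [Pi.add_apply, Pi.smul_apply, id, smul_sub]
      abel
    · simp
  simpa using hline.bondForce (C k) (hr k hk) (by simpa [sub_ne_zero] using hz k hk)

end

theorem bondForceDeriv_single_apply {ι : Type*} [Fintype ι] [DecidableEq ι] (C r : ℝ)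
    (z : EuclideanSpace ℝ ι) (p q : ι) :
    bondForceDeriv C r z (EuclideanSpace.single q 1) p =
      C * ((if p = q then (1 : ℝ) else 0) / r - (if p = q then (1 : ℝ) else 0) / ‖z‖
        + z p * z q / ‖z‖ ^ 3) := by
  simp only [bondForceDeriv, PiLp.add_apply, PiLp.smul_apply, smul_eq_mul,
    PiLp.single_apply, EuclideanSpace.inner_single_right, one_mul, conj_trivial]
  ring

theorem bbpd_discrete_force_partial_derivatives_general
    (N : ℕ)
    (x : Fin N → EuclideanSpace ℝ (Fin 3))
    (H : Fin N → Finset (Fin N))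
    (hHi : ∀ i, i ∉ H i)
    (hxne : ∀ i, ∀ j ∈ H i, x j ≠ x i)
    (c : ℝ)
    (V : Fin N → ℝ)
    (μ ν : Fin N → Fin N → ℝ)
    (F : Fin N → (Fin N → EuclideanSpace ℝ (Fin 3)) → EuclideanSpace ℝ (Fin 3))
    (hF : ∀ i w, F i w = ∑ j ∈ H i,
      (c * μ i j * ν i j * V j *
        ((‖(x j + w j) - (x i + w i)‖ - ‖x j - x i‖) / ‖x j - x i‖) /
        ‖(x j + w j) - (x i + w i)‖) • ((x j + w j) - (x i + w i)))
    (u : Fin N → EuclideanSpace ℝ (Fin 3))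
    (y : Fin N → EuclideanSpace ℝ (Fin 3)) (hy : ∀ k, y k = x k + u k)
    (hyne : ∀ i, ∀ j ∈ H i, y j ≠ y i) :
    ∀ (i j : Fin N) (p q : Fin 3),
      (j ∈ H i →
        HasLineDerivAt ℝ (fun w => F i w p)
          (c * μ i j * ν i j * V j *
            ((if p = q then (1:ℝ) else 0) / ‖x j - x i‖
              - (if p = q then (1:ℝ) else 0) / ‖y j - y i‖
              + (y j - y i) p * (y j - y i) q / ‖y j - y i‖ ^ 3))
          u (Pi.single j (EuclideanSpace.single q 1))) ∧
      (j ≠ i → j ∉ H i →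
        HasLineDerivAt ℝ (fun w => F i w p) (0 : ℝ)
          u (Pi.single j (EuclideanSpace.single q 1))) ∧
      (j = i →
        HasLineDerivAt ℝ (fun w => F i w p)
          (c * ∑ k ∈ H i, μ i k * ν i k * V k *
            ((if p = q then (1:ℝ) else 0) / ‖y k - y i‖
              - (if p = q then (1:ℝ) else 0) / ‖x k - x i‖
              - (y k - y i) p * (y k - y i) q / ‖y k - y i‖ ^ 3))
          u (Pi.single j (EuclideanSpace.single q 1))) := by
  intro i j p q
  set e : EuclideanSpace ℝ (Fin 3) := EuclideanSpace.single q 1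
  set v : Fin N → EuclideanSpace ℝ (Fin 3) := Pi.single j e
  have hD : HasLineDerivAt ℝ (fun w => F i w p) ((∑ k ∈ H i, bondForceDeriv
      (c * μ i k * ν i k * V k) ‖x k - x i‖ (y k - y i) (v k - v i)) p) u v := by
    have h := hasLineDerivAt_sum_bondForce (H i) (fun k => c * μ i k * ν i k * V k)
      (fun k => ‖x k - x i‖) x u v i
      (fun k hk => norm_ne_zero_iff.2 (sub_ne_zero.2 (hxne i k hk)))
      (fun k hk => by simpa only [← hy] using hyne i k hk)
    simp only [← hy] at h
    simp only [hF]
    exact (EuclideanSpace.proj p).hasFDerivAt.comp_hasDerivAt (0 : ℝ) h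
  refine ⟨fun hj => ?_, fun hji hj => ?_, fun hji => ?_⟩
  · have hji : j ≠ i := fun h => hHi i (h ▸ hj)
    convert hD using 1
    rw [Finset.sum_eq_single_of_mem j hj fun k _ hkj => by
      simp [v, Pi.single_eq_of_ne hkj, Pi.single_eq_of_ne hji.symm, bondForceDeriv_zero]]
    simp [v, Pi.single_eq_of_ne hji.symm, e, bondForceDeriv_single_apply]
  · convert hD using 1
    rw [Finset.sum_eq_zero fun k hk => ?_]
    · simp
    have hkj : k ≠ j := fun h => hj (h ▸ hk)
    simp [v, Pi.single_eq_of_ne hkj, Pi.single_eq_of_ne hji.symm, bondForceDeriv_zero]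
  · subst hji
    convert hD using 1
    have hdir : ∀ k ∈ H j, v k - v j = -e := fun k hk => by
      simp [v, Pi.single_eq_of_ne (ne_of_mem_of_not_mem hk (hHi j))]
    rw [Finset.mul_sum, WithLp.ofLp_sum, Finset.sum_apply]
    refine Finset.sum_congr rfl fun k hk => ?_
    rw [hdir k hk, bondForceDeriv_neg, PiLp.neg_apply, bondForceDeriv_single_apply]
    ring

/-- For the discretized bond-based peridynamic total force density
`F_i(u) = Σ_{j ∈ H i} c μ_{ij} ν_{ij} V_j s_{ij} (y_j − y_i)/‖y_j − y_i‖` with `y_k = x_k + u_k`,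
at any displacement field `u` with `y j ≠ y i` for all bonds, the partial derivative of the `p`-th
component of `F_i` with respect to the `q`-th component of `u j` exists and is given by the three
case formulas (off-diagonal bonded, off-diagonal unbonded, diagonal). -/
theorem bbpd_discrete_force_partial_derivatives
    (N : ℕ) (hN : 1 ≤ N)
    (x : Fin N → EuclideanSpace ℝ (Fin 3))
    (H : Fin N → Finset (Fin N))
    (hHi : ∀ i, i ∉ H i)
    (hxne : ∀ i, ∀ j ∈ H i, x j ≠ x i)
    (c : ℝ) (hc : 0 < c)
    (V : Fin N → ℝ) (hV : ∀ j, 0 < V j)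
    (μ ν : Fin N → Fin N → ℝ)
    (F : Fin N → (Fin N → EuclideanSpace ℝ (Fin 3)) → EuclideanSpace ℝ (Fin 3))
    (hF : ∀ i w, F i w = ∑ j ∈ H i,
      (c * μ i j * ν i j * V j *
        ((‖(x j + w j) - (x i + w i)‖ - ‖x j - x i‖) / ‖x j - x i‖) /
        ‖(x j + w j) - (x i + w i)‖) • ((x j + w j) - (x i + w i)))
    (u : Fin N → EuclideanSpace ℝ (Fin 3))
    (y : Fin N → EuclideanSpace ℝ (Fin 3)) (hy : ∀ k, y k = x k + u k)
    (hyne : ∀ i, ∀ j ∈ H i, y j ≠ y i) :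
    ∀ (i j : Fin N) (p q : Fin 3),
      (j ∈ H i →
        HasLineDerivAt ℝ (fun w => F i w p)
          (c * μ i j * ν i j * V j *
            ((if p = q then (1:ℝ) else 0) / ‖x j - x i‖
              - (if p = q then (1:ℝ) else 0) / ‖y j - y i‖
              + (y j - y i) p * (y j - y i) q / ‖y j - y i‖ ^ 3))
          u (Pi.single j (EuclideanSpace.single q 1))) ∧
      (j ≠ i → j ∉ H i →
        HasLineDerivAt ℝ (fun w => F i w p) (0 : ℝ)
          u (Pi.single j (EuclideanSpace.single q 1))) ∧
      (j = i →
        HasLineDerivAt ℝ (fun w => F i w p)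
          (c * ∑ k ∈ H i, μ i k * ν i k * V k *
            ((if p = q then (1:ℝ) else 0) / ‖y k - y i‖
              - (if p = q then (1:ℝ) else 0) / ‖x k - x i‖
              - (y k - y i) p * (y k - y i) q / ‖y k - y i‖ ^ 3))
          u (Pi.single j (EuclideanSpace.single q 1))) :=
  bbpd_discrete_force_partial_derivatives_general N x H hHi hxne c V μ ν F hF u y hy hyne
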